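/- Let (Q,R) be a gentle presentation and write H^m for the degree-m cohomology of the complex k(Γ∥B). The following are equivalent: (1) there is an integer m₀ such that Γ_m = ∅ for all m ≥ m₀ (equivalently, the algebra kQ/⟨R⟩ has finite global dimension); (2) there is an integer m₀ such that H^m = 0 for all m ≥ m₀; (3) there is no complete cycle in (Q,R). -/

import Mathlib

/-!
Common framework: quivers, paths (as a start vertex together with a list of
composable arrows, listed in order of traversal, so that the paper's path
`c_m ⋯ c_1` corresponds to the list `[c_1, …, c_m]`), gentle and quadratic
monomial presentations, the cochain complex `k(Γ ∥ B)` and the chain complex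
`k(B ⊙ Γ)` of the paper.
-/

namespace GentleTT

structure Quiv where
  V : Type
  A : Type
  [fintV : Fintype V]
  [fintA : Fintype A]
  [decV : DecidableEq V]
  [decA : DecidableEq A]
  src : A → V
  tgt : A → V

attribute [instance] Quiv.fintV Quiv.fintA Quiv.decV Quiv.decA

/-- A "path datum": a start vertex together with the list of arrows traversed. -/
abbrev PathDat (Q : Quiv) := Q.V × List Q.A

def psrc (Q : Quiv) (p : PathDat Q) : Q.V := p.1

def ptgt (Q : Quiv) (p : PathDat Q) : Q.V := p.2.getLast?.elim p.1 Q.tgt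

def plen (Q : Quiv) (p : PathDat Q) : ℕ := p.2.length

/-- `p` is a genuine path: consecutive arrows compose, and the recorded start
vertex is the source of the first arrow (if any). -/
def Ok (Q : Quiv) (p : PathDat Q) : Prop :=
  p.2.Chain' (fun a b => Q.tgt a = Q.src b) ∧ ∀ a ∈ p.2.head?, Q.src a = p.1

/-- `p` is a path none of whose length-2 subpaths lies in `R`
(an element of the basis `B` of `kQ/⟨R⟩`). -/
def InB (Q : Quiv) (R : Set (Q.A × Q.A)) (p : PathDat Q) : Prop :=
  Ok Q p ∧ p.2.Chain' (fun a b => (a, b) ∉ R)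

/-- `p` is a path all of whose length-2 subpaths lie in `R` (an element of `Γ`). -/
def InG (Q : Quiv) (R : Set (Q.A × Q.A)) (p : PathDat Q) : Prop :=
  Ok Q p ∧ p.2.Chain' (fun a b => (a, b) ∈ R)

/-- Parallel paths: same source and same target. -/
def Par (Q : Quiv) (p q : PathDat Q) : Prop :=
  psrc Q p = psrc Q q ∧ ptgt Q p = ptgt Q q

/-- Antiparallel paths: `s(p) = t(q)` and `t(p) = s(q)`. -/
def AntiPar (Q : Quiv) (p q : PathDat Q) : Prop :=
  psrc Q p = ptgt Q q ∧ ptgt Q p = psrc Q q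

/-- A cycle: a path of positive length whose source equals its target. -/
def IsCycle (Q : Quiv) (p : PathDat Q) : Prop :=
  Ok Q p ∧ p.2 ≠ [] ∧ psrc Q p = ptgt Q p

/-- Rotation of a cycle: the paper's `rot (c_m ⋯ c_1) = c_{m-1} ⋯ c_1 c_m`
(the last arrow traversed becomes the first one traversed). -/
def rotP (Q : Quiv) (p : PathDat Q) : PathDat Q :=
  match p.2.getLast? with
  | none => p
  | some a => (Q.src a, a :: p.2.dropLast)

/-- Iterated rotation `rot^i`. -/
def rotI (Q : Quiv) (i : ℕ) (p : PathDat Q) : PathDat Q := (rotP Q)^[i] p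

def powL {α : Type} (l : List α) : ℕ → List α
  | 0 => []
  | n + 1 => l ++ powL l n

/-- The `n`-th power `p^n` of a (cyclic) path. -/
def powP (Q : Quiv) (p : PathDat Q) (n : ℕ) : PathDat Q := (p.1, powL p.2 n)

/-- A primitive cycle: a cycle that is not a proper power of another cycle. -/
def IsPrimitive (Q : Quiv) (p : PathDat Q) : Prop :=
  IsCycle Q p ∧ ∀ (q : PathDat Q) (n : ℕ), IsCycle Q q → 2 ≤ n → p ≠ powP Q q n

/-- The period of a cycle: the least `i ≥ 1` with `rot^i p = p`. -/
noncomputable def periodP (Q : Quiv) (p : PathDat Q) : ℕ :=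
  sInf {i : ℕ | 1 ≤ i ∧ rotI Q i p = p}

/-- Two cycles are conjugate (belong to the same circuit) if one is obtained
from the other by iterated rotation. -/
def RotEquiv (Q : Quiv) (p q : PathDat Q) : Prop := ∃ i : ℕ, rotI Q i p = q

/-- A cocomplete cycle: `p² ∈ B`. -/
def Cocomplete (Q : Quiv) (R : Set (Q.A × Q.A)) (p : PathDat Q) : Prop :=
  IsCycle Q p ∧ InB Q R (powP Q p 2)

/-- A complete cycle: `p² ∈ Γ`. -/
def Complete (Q : Quiv) (R : Set (Q.A × Q.A)) (p : PathDat Q) : Prop :=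
  IsCycle Q p ∧ InG Q R (powP Q p 2)

/-- `B`-maximal path: in `B` and not a proper subpath of another element of `B`. -/
def BMax (Q : Quiv) (R : Set (Q.A × Q.A)) (p : PathDat Q) : Prop :=
  InB Q R p ∧ ∀ q : PathDat Q, InB Q R q → p.2 <:+: q.2 → p.2 = q.2

/-- `Γ`-maximal path: in `Γ` and not a proper subpath of another element of `Γ`. -/
def GMax (Q : Quiv) (R : Set (Q.A × Q.A)) (p : PathDat Q) : Prop :=
  InG Q R p ∧ ∀ q : PathDat Q, InG Q R q → p.2 <:+: q.2 → p.2 = q.2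

def Adj (Q : Quiv) (v w : Q.V) : Prop :=
  ∃ a : Q.A, (Q.src a = v ∧ Q.tgt a = w) ∨ (Q.src a = w ∧ Q.tgt a = v)

/-- Connectedness of the underlying graph of the quiver. -/
def Connected (Q : Quiv) : Prop := ∀ v w : Q.V, Relation.ReflTransGen (Adj Q) v w

/-- A quadratic monomial presentation: the relations are paths of length 2. -/
def IsQuadMon (Q : Quiv) (R : Set (Q.A × Q.A)) : Prop :=
  ∀ r ∈ R, Q.tgt r.1 = Q.src r.2

/-- A gentle presentation. -/
structure IsGentle (Q : Quiv) (R : Set (Q.A × Q.A)) : Prop where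
  nonempty : Nonempty Q.V
  connected : Connected Q
  relComposable : ∀ r ∈ R, Q.tgt r.1 = Q.src r.2
  srcLe : ∀ v : Q.V, {a : Q.A | Q.src a = v}.ncard ≤ 2
  tgtLe : ∀ v : Q.V, {a : Q.A | Q.tgt a = v}.ncard ≤ 2
  uniqNotRelAfter : ∀ a : Q.A, {b : Q.A | Q.tgt a = Q.src b ∧ (a, b) ∉ R}.Subsingleton
  uniqNotRelBefore : ∀ a : Q.A, {c : Q.A | Q.tgt c = Q.src a ∧ (c, a) ∉ R}.Subsingleton
  uniqRelAfter : ∀ a : Q.A, {b : Q.A | Q.tgt a = Q.src b ∧ (a, b) ∈ R}.Subsingleton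
  uniqRelBefore : ∀ a : Q.A, {c : Q.A | Q.tgt c = Q.src a ∧ (c, a) ∈ R}.Subsingleton

/-- A spanning tree of the (finite, connected) quiver `Q`: a set of arrows
which connects all vertices and has exactly `|Q₀| - 1` elements. -/
def IsSpanningTree (Q : Quiv) (T : Set Q.A) : Prop :=
  (∀ v w : Q.V, Relation.ReflTransGen
      (fun x y => ∃ a ∈ T, (Q.src a = x ∧ Q.tgt a = y) ∨ (Q.src a = y ∧ Q.tgt a = x)) v w) ∧
  T.ncard + 1 = Fintype.card Q.V

/-- A set of representatives, one for each rotation class of cycles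
satisfying `Pred`. -/
def IsRepSet (Q : Quiv) (P : Set (PathDat Q)) (Pred : PathDat Q → Prop) : Prop :=
  (∀ p ∈ P, Pred p) ∧ ∀ q : PathDat Q, Pred q → ∃! p, p ∈ P ∧ RotEquiv Q q p

/-- `S` is a valid choice of the paper's set `Crep` for the predicate `Pred`
(e.g. cocompleteness, or completeness): it consists of all positive powers of a
chosen set of representatives of the rotation classes of primitive cycles
satisfying `Pred`. -/
def IsCrep (Q : Quiv) (S : Set (PathDat Q)) (Pred : PathDat Q → Prop) : Prop :=
  ∃ P : Set (PathDat Q),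
    IsRepSet Q P (fun p => IsPrimitive Q p ∧ Pred p) ∧
    S = {x | ∃ p ∈ P, ∃ n : ℕ, 1 ≤ n ∧ x = powP Q p n}

/-! ### The cochain complex `k(Γ ∥ B)` -/

/-- Membership in the degree-`m` basis `Γ_m ∥ B` of the cochain complex. -/
def GBmem (Q : Quiv) (R : Set (Q.A × Q.A)) (m : ℕ) (x : PathDat Q × PathDat Q) : Prop :=
  InG Q R x.1 ∧ plen Q x.1 = m ∧ InB Q R x.2 ∧ Par Q x.1 x.2

abbrev GB (Q : Quiv) (R : Set (Q.A × Q.A)) (m : ℕ) :=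
  {x : PathDat Q × PathDat Q // GBmem Q R m x}

/-- The degree-`m` component of the cochain complex `k(Γ ∥ B)`. -/
abbrev Coch (k : Type) [Field k] (Q : Quiv) (R : Set (Q.A × Q.A)) (m : ℕ) :=
  GB Q R m →₀ k

/-- The basis vector of `k(Γ_m ∥ B)` attached to a raw pair of path data
(and `0` if the pair is not in `Γ_m ∥ B`). -/
noncomputable def bv (k : Type) [Field k] (Q : Quiv) (R : Set (Q.A × Q.A)) (m : ℕ)
    (x : PathDat Q × PathDat Q) : Coch k Q R m := by
  classical
  exact if h : GBmem Q R m x then Finsupp.single (⟨x, h⟩ : GB Q R m) (1 : k) else 0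

/-- Extension on the left (in the paper's notation): `p ↦ b p`. -/
def extL (Q : Quiv) (b : Q.A) (p : PathDat Q) : PathDat Q := (p.1, p.2 ++ [b])

/-- Extension on the right (in the paper's notation): `p ↦ p a`. -/
def extR (Q : Quiv) (a : Q.A) (p : PathDat Q) : PathDat Q := (Q.src a, a :: p.2)

/-- The differential on a basis element:
`d^m (γ, α) = Σ_b (bγ, bα) - (-1)^m Σ_a (γa, αa)`. -/
noncomputable def dB (k : Type) [Field k] (Q : Quiv) (R : Set (Q.A × Q.A)) (m : ℕ)
    (x : GB Q R m) : Coch k Q R (m + 1) := by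
  classical
  exact
    (∑ b : Q.A,
      if h : GBmem Q R (m + 1) (extL Q b x.val.1, extL Q b x.val.2) then
        Finsupp.single (⟨_, h⟩ : GB Q R (m + 1)) (1 : k) else 0)
    - ((-1 : k) ^ m) •
      (∑ a : Q.A,
        if h : Q.tgt a = psrc Q x.val.1 ∧
            GBmem Q R (m + 1) (extR Q a x.val.1, extR Q a x.val.2) then
          Finsupp.single (⟨_, h.2⟩ : GB Q R (m + 1)) (1 : k) else 0)

/-- The differential `d^m : k(Γ_m ∥ B) → k(Γ_{m+1} ∥ B)`. -/
noncomputable def dLin (k : Type) [Field k] (Q : Quiv) (R : Set (Q.A × Q.A)) (m : ℕ) :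
    Coch k Q R m →ₗ[k] Coch k Q R (m + 1) :=
  Finsupp.linearCombination k (dB k Q R m)

/-- The element `𝟙 = Σ_{i ∈ Q₀} (e_i, e_i)` (placed in degree `m`; it is the
intended element when `m = 0`). -/
noncomputable def oneD (k : Type) [Field k] (Q : Quiv) (R : Set (Q.A × Q.A)) (m : ℕ) :
    Coch k Q R m :=
  ∑ i : Q.V, bv k Q R m ((i, []), (i, []))

/-- `⟨α⟩ = Σ_{i=0}^{r-1} (s(rot^i α), rot^i α)`, `r` the period of `α`. -/
noncomputable def cycB (k : Type) [Field k] (Q : Quiv) (R : Set (Q.A × Q.A)) (m : ℕ)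
    (α : PathDat Q) : Coch k Q R m :=
  ∑ i ∈ Finset.range (periodP Q α),
    bv k Q R m ((psrc Q (rotI Q i α), []), rotI Q i α)

/-- `⟨C⟩ = Σ_{i=0}^{r-1} (-1)^{i m} (rot^i C, s(rot^i C))`, `r` the period of `C`. -/
noncomputable def cycG (k : Type) [Field k] (Q : Quiv) (R : Set (Q.A × Q.A)) (m : ℕ)
    (C : PathDat Q) : Coch k Q R m :=
  ∑ i ∈ Finset.range (periodP Q C),
    ((-1 : k) ^ (i * m)) • bv k Q R m (rotI Q i C, (psrc Q (rotI Q i C), []))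

/-- The coboundary subspace in degree `m` (zero in degree `0`). -/
noncomputable def cobSp (k : Type) [Field k] (Q : Quiv) (R : Set (Q.A × Q.A)) :
    (m : ℕ) → Submodule k (Coch k Q R m)
  | 0 => ⊥
  | m + 1 => LinearMap.range (dLin k Q R m)

/-- The cocycle subspace in degree `m`. -/
noncomputable def cocSp (k : Type) [Field k] (Q : Quiv) (R : Set (Q.A × Q.A)) (m : ℕ) :
    Submodule k (Coch k Q R m) :=
  LinearMap.ker (dLin k Q R m)

/-- The degree-`m` cohomology `HH^m` of the complex `k(Γ ∥ B)` vanishes: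
every cocycle is a coboundary. -/
def CohomIsZero (k : Type) [Field k] (Q : Quiv) (R : Set (Q.A × Q.A)) (m : ℕ) : Prop :=
  cocSp k Q R m ≤ cobSp k Q R m

/-- The degree-`m` cohomology `HH^m` of the complex `k(Γ ∥ B)` is
finite-dimensional: there is a finite set of cocycles whose classes span it. -/
def CohomFinDim (k : Type) [Field k] (Q : Quiv) (R : Set (Q.A × Q.A)) (m : ℕ) : Prop :=
  ∃ G : Finset (Coch k Q R m), ↑G ⊆ (cocSp k Q R m : Set (Coch k Q R m)) ∧
    cocSp k Q R m ≤ cobSp k Q R m ⊔ Submodule.span k ↑G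

/-- The degree-`m` cohomology `HH^m` of the complex `k(Γ ∥ B)` has dimension at
most `n`: there are `n` cocycles whose classes span it. -/
def CohomDimLe (k : Type) [Field k] (Q : Quiv) (R : Set (Q.A × Q.A)) (m n : ℕ) : Prop :=
  ∃ G : Finset (Coch k Q R m), G.card ≤ n ∧
    ↑G ⊆ (cocSp k Q R m : Set (Coch k Q R m)) ∧
    cocSp k Q R m ≤ cobSp k Q R m ⊔ Submodule.span k ↑G

/-- `Gen` is a basis of the kernel of `d⁰`, i.e. it freely generates `HH⁰`. -/
def FreelyGeneratesKer0 (k : Type) [Field k] (Q : Quiv) (R : Set (Q.A × Q.A))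
    (Gen : Set (Coch k Q R 0)) : Prop :=
  (∀ x ∈ Gen, dLin k Q R 0 x = 0) ∧
  (∀ z : Coch k Q R 0, dLin k Q R 0 z = 0 → z ∈ Submodule.span k Gen) ∧
  LinearIndependent k (fun x : Gen => (x : Coch k Q R 0))

/-- The cohomology classes of the elements of `Gen` freely generate the
degree-`(m+1)` cohomology of `k(Γ ∥ B)`: all elements of `Gen` are cocycles,
every cocycle is congruent to an element of their span modulo coboundaries, no
nonzero element of their span is a coboundary, and `Gen` is linearly
independent. -/
def FreelyGeneratesCohom (k : Type) [Field k] (Q : Quiv) (R : Set (Q.A × Q.A)) (m : ℕ)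
    (Gen : Set (Coch k Q R (m + 1))) : Prop :=
  (∀ x ∈ Gen, dLin k Q R (m + 1) x = 0) ∧
  (∀ z : Coch k Q R (m + 1), dLin k Q R (m + 1) z = 0 →
      ∃ y : Coch k Q R m, z - dLin k Q R m y ∈ Submodule.span k Gen) ∧
  (∀ x ∈ Submodule.span k Gen, x ∈ LinearMap.range (dLin k Q R m) → x = 0) ∧
  LinearIndependent k (fun x : Gen => (x : Coch k Q R (m + 1)))

/-! ### The chain complex `k(B ⊙ Γ)` -/

/-- Membership in the degree-`m` basis `B ⊙ Γ_m` of the chain complex. -/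
def BGmem (Q : Quiv) (R : Set (Q.A × Q.A)) (m : ℕ) (x : PathDat Q × PathDat Q) : Prop :=
  InB Q R x.1 ∧ InG Q R x.2 ∧ plen Q x.2 = m ∧ AntiPar Q x.1 x.2

abbrev BGt (Q : Quiv) (R : Set (Q.A × Q.A)) (m : ℕ) :=
  {x : PathDat Q × PathDat Q // BGmem Q R m x}

/-- The degree-`m` component of the chain complex `k(B ⊙ Γ)`. -/
abbrev Chn (k : Type) [Field k] (Q : Quiv) (R : Set (Q.A × Q.A)) (m : ℕ) :=
  BGt Q R m →₀ k

/-- The basis vector of `k(B ⊙ Γ_m)` attached to a raw pair of path data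
(and `0` if the pair is not in `B ⊙ Γ_m`). -/
noncomputable def bw (k : Type) [Field k] (Q : Quiv) (R : Set (Q.A × Q.A)) (m : ℕ)
    (x : PathDat Q × PathDat Q) : Chn k Q R m := by
  classical
  exact if h : BGmem Q R m x then Finsupp.single (⟨x, h⟩ : BGt Q R m) (1 : k) else 0

/-- `l1(p)`: the last arrow of `p` (as a path of length one). -/
def l1P (Q : Quiv) (p : PathDat Q) : PathDat Q :=
  match p.2.getLast? with
  | none => p
  | some a => (Q.src a, [a])

/-- `l2(p)`: `p` with its last arrow removed. -/
def l2P (Q : Quiv) (p : PathDat Q) : PathDat Q := (p.1, p.2.dropLast)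

/-- `r1(p)`: `p` with its first arrow removed. -/
def r1P (Q : Quiv) (p : PathDat Q) : PathDat Q :=
  match p.2 with
  | [] => p
  | a :: l => (Q.tgt a, l)

/-- `r2(p)`: the first arrow of `p` (as a path of length one). -/
def r2P (Q : Quiv) (p : PathDat Q) : PathDat Q :=
  match p.2 with
  | [] => p
  | a :: _ => (Q.src a, [a])

/-- The raw first term `(α·l1(γ), l2(γ))` of the boundary of `(α, γ)`. -/
def d1raw (Q : Quiv) (x : PathDat Q × PathDat Q) : PathDat Q × PathDat Q :=
  match x.2.2.getLast? with
  | none => x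
  | some a => ((Q.src a, a :: x.1.2), (x.2.1, x.2.2.dropLast))

/-- The raw second term `(r2(γ)·α, r1(γ))` of the boundary of `(α, γ)`. -/
def d2raw (Q : Quiv) (x : PathDat Q × PathDat Q) : PathDat Q × PathDat Q :=
  match x.2.2 with
  | [] => x
  | c :: l => ((x.1.1, x.1.2 ++ [c]), (Q.tgt c, l))

/-- The boundary of a basis element:
`d_m (α, γ) = (α·l1(γ), l2(γ)) + (-1)^m (r2(γ)·α, r1(γ))` (in degree `m = m+1`),
where pairs whose first component is not in `B` are interpreted as `0`. -/
noncomputable def bdB (k : Type) [Field k] (Q : Quiv) (R : Set (Q.A × Q.A)) (m : ℕ)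
    (x : BGt Q R (m + 1)) : Chn k Q R m :=
  bw k Q R m (d1raw Q x.val) + ((-1 : k) ^ (m + 1)) • bw k Q R m (d2raw Q x.val)

/-- The boundary map `d_{m+1} : k(B ⊙ Γ_{m+1}) → k(B ⊙ Γ_m)`. -/
noncomputable def bd (k : Type) [Field k] (Q : Quiv) (R : Set (Q.A × Q.A)) (m : ℕ) :
    Chn k Q R (m + 1) →ₗ[k] Chn k Q R m :=
  Finsupp.linearCombination k (bdB k Q R m)

/-- The subspace of cycles in degree `m` (everything in degree `0`). -/
noncomputable def ZSp (k : Type) [Field k] (Q : Quiv) (R : Set (Q.A × Q.A)) :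
    (m : ℕ) → Submodule k (Chn k Q R m)
  | 0 => ⊤
  | m + 1 => LinearMap.ker (bd k Q R m)

/-- The subspace of boundaries in degree `m`. -/
noncomputable def BSp (k : Type) [Field k] (Q : Quiv) (R : Set (Q.A × Q.A)) (m : ℕ) :
    Submodule k (Chn k Q R m) :=
  LinearMap.range (bd k Q R m)

/-- The degree-`m` homology `HH_m` of the complex `k(B ⊙ Γ)` vanishes:
every cycle is a boundary. -/
def HomIsZero (k : Type) [Field k] (Q : Quiv) (R : Set (Q.A × Q.A)) (m : ℕ) : Prop :=
  ZSp k Q R m ≤ BSp k Q R m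

/-- The degree-`m` homology `HH_m` of the complex `k(B ⊙ Γ)` is
finite-dimensional: there is a finite set of cycles whose classes span it. -/
def HomFinDim (k : Type) [Field k] (Q : Quiv) (R : Set (Q.A × Q.A)) (m : ℕ) : Prop :=
  ∃ G : Finset (Chn k Q R m), ↑G ⊆ (ZSp k Q R m : Set (Chn k Q R m)) ∧
    ZSp k Q R m ≤ BSp k Q R m ⊔ Submodule.span k ↑G

/-- The concatenation `α γ` of an antiparallel pair (a cycle, or a trivial path). -/
def concatP (Q : Quiv) (x : PathDat Q × PathDat Q) : PathDat Q := (x.2.1, x.2.2 ++ x.1.2)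

/-- The degree-`m` component of the subcomplex `k(B ⊙ Γ)_C`, spanned by the
basis elements whose concatenation lies in the circuit (rotation class) of `c`. -/
noncomputable def Wsp (k : Type) [Field k] (Q : Quiv) (R : Set (Q.A × Q.A))
    (c : PathDat Q) (m : ℕ) : Submodule k (Chn k Q R m) :=
  Submodule.span k {z : Chn k Q R m |
    ∃ x : BGt Q R m, RotEquiv Q (concatP Q x.val) c ∧ z = Finsupp.single x (1 : k)}

/-- The boundaries of the subcomplex `k(B ⊙ Γ)_C` in degree `m`. -/
noncomputable def WB (k : Type) [Field k] (Q : Quiv) (R : Set (Q.A × Q.A))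
    (c : PathDat Q) (m : ℕ) : Submodule k (Chn k Q R m) :=
  Submodule.map (bd k Q R m) (Wsp k Q R c (m + 1))

/-- The cycles of the subcomplex `k(B ⊙ Γ)_C` in degree `m`. -/
noncomputable def WZ (k : Type) [Field k] (Q : Quiv) (R : Set (Q.A × Q.A))
    (c : PathDat Q) (m : ℕ) : Submodule k (Chn k Q R m) :=
  ZSp k Q R m ⊓ Wsp k Q R c m

/-- The degree-`m` homology of `k(B ⊙ Γ)_C` is one-dimensional, spanned by the
homology class of `v`. -/
def SubHomSpannedBy (k : Type) [Field k] (Q : Quiv) (R : Set (Q.A × Q.A))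
    (c : PathDat Q) (m : ℕ) (v : Chn k Q R m) : Prop :=
  v ∈ WZ k Q R c m ∧ v ∉ WB k Q R c m ∧
  ∀ z ∈ WZ k Q R c m, ∃ t : k, z - t • v ∈ WB k Q R c m

/-- `ĥ(c) = Σ_{i=0}^{r-1} (r1(rot^i c), r2(rot^i c))` (degree 1, for cocomplete cycles;
placed in degree `m`). -/
noncomputable def hCycR (k : Type) [Field k] (Q : Quiv) (R : Set (Q.A × Q.A)) (m : ℕ)
    (c : PathDat Q) : Chn k Q R m :=
  ∑ i ∈ Finset.range (periodP Q c),
    bw k Q R m (r1P Q (rotI Q i c), r2P Q (rotI Q i c))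

/-- `ĥ(c) = Σ_{i=0}^{r-1} (-1)^{(m+1) i} (s(rot^i c), rot^i c)` (degree `m`, for
complete cycles of length `m`). -/
noncomputable def hCycM (k : Type) [Field k] (Q : Quiv) (R : Set (Q.A × Q.A)) (m : ℕ)
    (c : PathDat Q) : Chn k Q R m :=
  ∑ i ∈ Finset.range (periodP Q c),
    ((-1 : k) ^ ((m + 1) * i)) • bw k Q R m ((psrc Q (rotI Q i c), []), rotI Q i c)

/-- The homology classes of the elements of `Gen` freely generate the degree-`m`
homology of `k(B ⊙ Γ)`. -/
def FreelyGeneratesHom (k : Type) [Field k] (Q : Quiv) (R : Set (Q.A × Q.A)) (m : ℕ)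
    (Gen : Set (Chn k Q R m)) : Prop :=
  (∀ x ∈ Gen, x ∈ ZSp k Q R m) ∧
  (∀ z ∈ ZSp k Q R m, ∃ y : Chn k Q R (m + 1), z - bd k Q R m y ∈ Submodule.span k Gen) ∧
  (∀ x ∈ Submodule.span k Gen, x ∈ LinearMap.range (bd k Q R m) → x = 0) ∧
  LinearIndependent k (fun x : Gen => (x : Chn k Q R m))

/-!
A path in `Γ` longer than the number of arrows repeats an arrow, and the segment between two
occurrences is a complete cycle; conversely all powers of a complete cycle lie in `Γ`. Hence `Γ`
is bounded iff there is no complete cycle, and if `Γ` is bounded the complex `k(Γ ∥ B)` itself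
vanishes in high degrees.

If `C` is complete of length `m`, gentleness leaves exactly one way to extend `(C, e)` on either
side, so `d(C, e) = (cC, c) - (-1)^m (C z, z)` where `c` is the first and `z` the last arrow of
`C`; the second term is the first one for the rotation of `C`. For a power `D` of `C` of even
length the sum `⟨D⟩` of the `(rot^i D, e)` over a period therefore telescopes to a cocycle. It is
not a coboundary: a coboundary vanishes on every pair whose `B`-component is trivial, while `⟨D⟩`
has coefficient `1` at `(D, e)`.
-/

theorem _root_.List.isChain_and_iff {α : Type*} {r s : α → α → Prop} {l : List α} :
    l.IsChain (fun a b => r a b ∧ s a b) ↔ l.IsChain r ∧ l.IsChain s := by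
  induction l with
  | nil => simp
  | cons a l ih => simp only [List.isChain_cons, ih]; grind

theorem _root_.List.isChain_append_self_iff {α : Type*} {r : α → α → Prop} {l : List α} :
    (l ++ l).IsChain r ↔ Cycle.Chain r (l : Cycle α) := by
  rcases l with _ | ⟨a, t⟩
  · simp
  rw [Cycle.chain_coe_cons, show a :: t ++ a :: t = a :: (t ++ [a]) ++ t by simp]
  refine ⟨fun h => h.left_of_append, fun h => h.append (h.infix ⟨[a], [a], by simp⟩) ?_⟩
  rcases t with _ | ⟨b, t⟩
  · simp
  · simpa [List.getLast?_cons, List.getLast?_append] using h.rel_head?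

theorem _root_.Cycle.Chain.rel_getLast_cons {α : Type*} {r : α → α → Prop} {c : α} {t : List α}
    (h : Cycle.Chain r (c :: t : List α)) : r ((c :: t).getLast (List.cons_ne_nil c t)) c :=
  (List.isChain_append_self_iff.2 h).rel_getLast_head_of_append _ (List.cons_ne_nil c t)

theorem powL_add {α : Type} (l : List α) (m n : ℕ) : powL l (m + n) = powL l m ++ powL l n := by
  induction m with
  | zero => simp [powL]
  | succ m ih => simp [Nat.succ_add, powL, ih]

theorem isChain_powL {α : Type} {r : α → α → Prop} {l : List α} (h : (l ++ l).IsChain r) :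
    ∀ n, (powL l n).IsChain r
  | 0 => List.isChain_nil
  | 1 => by simpa [powL] using h.left_of_append
  | n + 2 => by
    refine h.left_of_append.append (isChain_powL h (n + 1)) ?_
    rcases eq_or_ne l [] with rfl | hl
    · simp
    simpa [powL, List.head?_append_of_ne_nil _ hl] using (List.isChain_append.1 h).2.2

section Paths

variable {Q : Quiv} {R : Set (Q.A × Q.A)}

def IsRelation (Q : Quiv) (R : Set (Q.A × Q.A)) (a b : Q.A) : Prop :=
  Q.tgt a = Q.src b ∧ (a, b) ∈ R

theorem inG_iff {v : Q.V} {l : List Q.A} :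
    InG Q R (v, l) ↔ l.IsChain (IsRelation Q R) ∧ ∀ a ∈ l.head?, Q.src a = v := by
  change (l.IsChain _ ∧ _) ∧ l.IsChain _ ↔ l.IsChain (fun a b => _ ∧ _) ∧ _
  rw [List.isChain_and_iff]
  tauto

theorem complete_iff {p : PathDat Q} :
    Complete Q R p ↔
      ∃ a t, p = (Q.src a, a :: t) ∧ Cycle.Chain (IsRelation Q R) (a :: t : List Q.A) := by
  obtain ⟨v, l⟩ := p
  have hsq : powP Q (v, l) 2 = (v, l ++ l) := by simp [powP, powL]
  simp only [Complete, IsCycle, hsq, inG_iff, ← List.isChain_append_self_iff]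
  constructor
  · rintro ⟨⟨hok, hne, -⟩, hG, -⟩
    obtain ⟨a, t, rfl⟩ := List.exists_cons_of_ne_nil hne
    exact ⟨a, t, by simpa using (hok.2 a rfl).symm, hG⟩
  · rintro ⟨a, t, heq, hc⟩
    obtain ⟨rfl, rfl⟩ := Prod.mk.inj heq
    have hInG : InG Q R (Q.src a, a :: t) := inG_iff.2 ⟨hc.left_of_append, by simp⟩
    refine ⟨⟨hInG.1, List.cons_ne_nil _ _, ?_⟩, hc, by simp⟩
    simp [psrc, ptgt, List.getLast?_eq_some_getLast (List.cons_ne_nil a t),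
      (Cycle.Chain.rel_getLast_cons (List.isChain_append_self_iff.1 hc)).1]

theorem Complete.inG {p : PathDat Q} (h : Complete Q R p) : InG Q R p := by
  obtain ⟨a, t, rfl, hc⟩ := complete_iff.1 h
  exact inG_iff.2 ⟨(List.isChain_append_self_iff.2 hc).left_of_append, by simp⟩

theorem Complete.ext {p q : PathDat Q} (hp : Complete Q R p) (hq : Complete Q R q)
    (h : p.2 = q.2) : p = q := by
  obtain ⟨a, t, rfl, -⟩ := complete_iff.1 hp
  obtain ⟨b, s, rfl, -⟩ := complete_iff.1 hq
  obtain ⟨rfl, rfl⟩ := List.cons.inj h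
  rfl

theorem rotP_of_ne_nil {p : PathDat Q} (h : p.2 ≠ []) :
    rotP Q p = (Q.src (p.2.getLast h), p.2.getLast h :: p.2.dropLast) := by
  simp [rotP, List.getLast?_eq_some_getLast h]

theorem rotP_snd (p : PathDat Q) : (rotP Q p).2 = p.2.rotate (p.2.length - 1) := by
  obtain ⟨v, l⟩ := p
  rcases List.eq_nil_or_concat l with rfl | ⟨l', z, rfl⟩
  · rfl
  simp [rotP, List.rotate_append_length_eq]

theorem rotI_succ (i : ℕ) (p : PathDat Q) : rotI Q (i + 1) p = rotP Q (rotI Q i p) :=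
  Function.iterate_succ_apply' _ _ _

theorem rotI_snd (i : ℕ) (p : PathDat Q) :
    (rotI Q i p).2 = p.2.rotate (i * (p.2.length - 1)) := by
  induction i with
  | zero => simp [rotI]
  | succ i ih =>
    rw [rotI_succ, rotP_snd, ih, List.length_rotate,
      List.rotate_rotate, Nat.succ_mul]

theorem length_rotI_snd (i : ℕ) (p : PathDat Q) : (rotI Q i p).2.length = p.2.length := by
  rw [rotI_snd, List.length_rotate]

theorem Complete.rot {p : PathDat Q} (h : Complete Q R p) : Complete Q R (rotP Q p) := by
  obtain ⟨a, t, rfl, hc⟩ := complete_iff.1 h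
  rw [rotP_of_ne_nil (List.cons_ne_nil a t)]
  refine complete_iff.2 ⟨_, _, rfl, ?_⟩
  rwa [Cycle.coe_eq_coe.2 (List.IsRotated.cons_getLast_dropLast _ _)]

theorem Complete.rotIter {p : PathDat Q} (h : Complete Q R p) (i : ℕ) :
    Complete Q R (rotI Q i p) := by
  induction i with
  | zero => exact h
  | succ i ih => rw [rotI_succ]; exact ih.rot

theorem Complete.rotI_length_eq_self {p : PathDat Q} (h : Complete Q R p) :
    rotI Q p.2.length p = p :=
  (h.rotIter _).ext h (by rw [rotI_snd, List.rotate_length_mul])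

theorem Complete.periodP_spec {p : PathDat Q} (h : Complete Q R p) :
    1 ≤ periodP Q p ∧ rotI Q (periodP Q p) p = p := by
  have hpos : 1 ≤ p.2.length := List.length_pos_iff.2 h.1.2.1
  exact Nat.sInf_mem (s := {i | 1 ≤ i ∧ rotI Q i p = p}) ⟨_, hpos, h.rotI_length_eq_self⟩

theorem rotI_ne_of_lt_periodP {p : PathDat Q} {i : ℕ} (hi : 0 < i) (hlt : i < periodP Q p) :
    rotI Q i p ≠ p :=
  fun h => Nat.notMem_of_lt_sInf hlt ⟨hi, h⟩

theorem Complete.pow {p : PathDat Q} (h : Complete Q R p) {n : ℕ} (hn : 0 < n) :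
    Complete Q R (powP Q p n) := by
  obtain ⟨a, t, rfl, hc⟩ := complete_iff.1 h
  obtain ⟨n, rfl⟩ := Nat.exists_eq_succ_of_ne_zero hn.ne'
  refine complete_iff.2 ⟨a, t ++ powL (a :: t) n, by simp [powP, powL], ?_⟩
  rw [← List.isChain_append_self_iff, ← List.cons_append, ← powL, ← powL_add]
  exact isChain_powL (List.isChain_append_self_iff.2 hc) _

theorem plen_powP (p : PathDat Q) (n : ℕ) : plen Q (powP Q p n) = n * plen Q p := by
  induction n with
  | zero => simp [powP, powL, plen]
  | succ n ih => simp_all [powP, powL, plen, Nat.succ_mul, Nat.add_comm]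

theorem exists_complete_of_not_nodup {p : PathDat Q} (hp : InG Q R p) (hnd : ¬ p.2.Nodup) :
    ∃ C, Complete Q R C := by
  obtain ⟨a, ha⟩ := not_forall_not.1 (mt List.nodup_iff_sublist.2 hnd)
  obtain ⟨r₁, r₂, hsplit, ha₁, ha₂⟩ := List.cons_sublist_iff.1 ha
  obtain ⟨s, u, rfl⟩ := List.append_of_mem ha₁
  obtain ⟨s', u', rfl⟩ := List.append_of_mem (List.singleton_sublist.1 ha₂)
  refine ⟨_, complete_iff.2 ⟨a, u ++ s', rfl, ?_⟩⟩
  rw [Cycle.chain_coe_cons]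
  refine (inG_iff.1 hp).1.infix ⟨s, u', ?_⟩
  simp [hsplit]

theorem exists_complete_of_card_lt_plen {p : PathDat Q} (hp : InG Q R p)
    (hlong : Fintype.card Q.A < plen Q p) : ∃ C, Complete Q R C :=
  exists_complete_of_not_nodup hp fun hnd => (hlong.trans_le hnd.length_le_card).false

theorem forall_plen_lt_iff_not_exists_complete :
    (∃ m₀ : ℕ, ∀ p : PathDat Q, InG Q R p → plen Q p < m₀) ↔ ¬∃ C : PathDat Q, Complete Q R C := by
  constructor
  · rintro ⟨m₀, hm₀⟩ ⟨C, hC⟩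
    have hlen := hm₀ _ (hC.pow m₀.succ_pos).inG
    have hpos : 0 < plen Q C := List.length_pos_iff.2 hC.1.2.1
    rw [plen_powP] at hlen
    nlinarith
  · intro hno
    exact ⟨Fintype.card Q.A + 1, fun p hp => Nat.lt_succ_of_le
      (not_lt.1 fun hlong => hno (exists_complete_of_card_lt_plen hp hlong))⟩

end Paths

section Cochains

variable {Q : Quiv} {R : Set (Q.A × Q.A)} (k : Type) [Field k] {m : ℕ}

theorem bv_apply (x : PathDat Q × PathDat Q) (y : GB Q R m) :
    bv k Q R m x y = if x = y.val then 1 else 0 := by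
  unfold bv
  split_ifs with hx hxy hxy
  · obtain rfl : (⟨x, hx⟩ : GB Q R m) = y := Subtype.ext hxy
    exact Finsupp.single_eq_same
  · exact Finsupp.single_eq_of_ne (fun h => hxy (congrArg Subtype.val h).symm)
  · exact absurd (hxy ▸ y.2) hx
  · rfl

theorem bv_eq_zero {x : PathDat Q × PathDat Q} (hx : ¬ GBmem Q R m x) : bv k Q R m x = 0 :=
  dif_neg hx

theorem dLin_bv {x : PathDat Q × PathDat Q} (hx : GBmem Q R m x) :
    dLin k Q R m (bv k Q R m x) = dB k Q R m ⟨x, hx⟩ := by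
  rw [bv, dif_pos hx, dLin, Finsupp.linearCombination_single, one_smul]

theorem dB_eq (x : GB Q R m) :
    dB k Q R m x =
      (∑ b : Q.A, bv k Q R (m + 1) (extL Q b x.val.1, extL Q b x.val.2)) -
        (-1 : k) ^ m • ∑ a : Q.A, if Q.tgt a = psrc Q x.val.1 then
          bv k Q R (m + 1) (extR Q a x.val.1, extR Q a x.val.2) else 0 := by
  unfold dB
  congr 2
  refine Finset.sum_congr rfl fun a _ => ?_
  by_cases ha : Q.tgt a = psrc Q x.val.1
  · by_cases hmem : GBmem Q R (m + 1) (extR Q a x.val.1, extR Q a x.val.2)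
    · rw [dif_pos ⟨ha, hmem⟩, if_pos ha, bv, dif_pos hmem]
    · rw [dif_neg (fun h => hmem h.2), if_pos ha, bv_eq_zero k hmem]
  · simp [ha]

theorem dB_apply_of_snd_eq_nil (x : GB Q R m) {y : GB Q R (m + 1)} (hy : y.val.2.2 = []) :
    dB k Q R m x y = 0 := by
  have hbv : ∀ z : PathDat Q × PathDat Q, z.2.2 ≠ [] → bv k Q R (m + 1) z y = 0 := by
    intro z hz
    rw [bv_apply, if_neg fun h => hz (by rw [h]; exact hy)]
  rw [dB_eq, Finsupp.sub_apply, Finsupp.smul_apply, Finsupp.finsetSum_apply,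
    Finsupp.finsetSum_apply, Finset.sum_eq_zero fun b _ => hbv _ (by simp [extL]),
    Finset.sum_eq_zero fun a _ => ?_, smul_zero, sub_zero]
  split_ifs
  · exact hbv _ (by simp [extR])
  · rfl

theorem dLin_apply_of_snd_eq_nil (w : Coch k Q R m) {y : GB Q R (m + 1)} (hy : y.val.2.2 = []) :
    dLin k Q R m w y = 0 := by
  rw [dLin, Finsupp.linearCombination_apply, Finsupp.sum_apply]
  exact Finset.sum_eq_zero fun x _ => by
    show (w x • dB k Q R m x) y = 0
    rw [Finsupp.smul_apply, dB_apply_of_snd_eq_nil k x hy, smul_zero]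

theorem not_cohomIsZero_of_apply_ne_zero {z : Coch k Q R (m + 1)}
    (hz : dLin k Q R (m + 1) z = 0) {y : GB Q R (m + 1)} (hy : y.val.2.2 = [])
    (hzy : z y ≠ 0) : ¬ CohomIsZero k Q R (m + 1) := by
  intro h
  obtain ⟨w, rfl⟩ := h (LinearMap.mem_ker.2 hz)
  exact hzy (dLin_apply_of_snd_eq_nil k w hy)

theorem cohomIsZero_of_forall_plen_lt {m₀ : ℕ} (h : ∀ p : PathDat Q, InG Q R p → plen Q p < m₀)
    (hm : m₀ ≤ m) : CohomIsZero k Q R m := by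
  intro x _
  obtain rfl : x = 0 := Finsupp.ext fun y => absurd (h _ y.2.1) (by rw [y.2.2.1]; omega)
  exact zero_mem _

end Cochains

section CompleteCocycle

variable {Q : Quiv} {R : Set (Q.A × Q.A)}

theorem Complete.gbmem {C : PathDat Q} (hC : Complete Q R C) :
    GBmem Q R (plen Q C) (C, (C.1, [])) :=
  ⟨hC.inG, rfl, ⟨⟨List.isChain_nil, by simp⟩, List.isChain_nil⟩, rfl, hC.1.2.2.symm⟩

variable (k : Type) [Field k] {m : ℕ}

-- `(c γ, c)` in the paper's notation, `c` the first arrow of `γ`.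
def extHead (γ : PathDat Q) : PathDat Q × PathDat Q :=
  ((γ.1, γ.2 ++ γ.2.take 1), (γ.1, γ.2.take 1))

theorem sum_bv_extL_of_complete (hg : IsGentle Q R) {γ : PathDat Q} (hγ : Complete Q R γ) :
    ∑ b : Q.A, bv k Q R m (extL Q b γ, extL Q b (γ.1, [])) = bv k Q R m (extHead γ) := by
  obtain ⟨c, t, rfl, hc⟩ := complete_iff.1 hγ
  rw [Finset.sum_eq_single_of_mem c (Finset.mem_univ c)]
  · simp [extL, extHead]
  · intro b _ hb
    refine bv_eq_zero k fun hmem => hb (hg.uniqRelAfter _ ?_ hc.rel_getLast_cons)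
    exact (inG_iff.1 hmem.1).1.rel_getLast_head_of_append (List.cons_ne_nil c t)
      (List.cons_ne_nil b [])

theorem sum_bv_extR_of_complete (hg : IsGentle Q R) {γ : PathDat Q} (hγ : Complete Q R γ) :
    (∑ a : Q.A, if Q.tgt a = psrc Q γ then
        bv k Q R m (extR Q a γ, extR Q a (γ.1, [])) else 0) =
      bv k Q R m (extHead (rotP Q γ)) := by
  obtain ⟨c, t, rfl, hc⟩ := complete_iff.1 hγ
  have hwrap := hc.rel_getLast_cons
  rw [Finset.sum_eq_single_of_mem _ (Finset.mem_univ ((c :: t).getLast (List.cons_ne_nil c t))),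
    if_pos (show Q.tgt _ = psrc Q (Q.src c, c :: t) from hwrap.1),
    rotP_of_ne_nil (List.cons_ne_nil c t)]
  · simp only [extR, extHead, List.take_succ_cons, List.take_zero, List.cons_append,
      List.dropLast_append_getLast]
  · intro a _ ha
    split_ifs
    · refine bv_eq_zero k fun hmem => ha (hg.uniqRelBefore c ?_ hwrap)
      exact (List.isChain_cons_cons.1 (inG_iff.1 hmem.1).1).1
    · rfl

theorem dLin_bv_of_complete (hg : IsGentle Q R) {γ : PathDat Q} (hγ : Complete Q R γ)
    (hm : plen Q γ = m) :
    dLin k Q R m (bv k Q R m (γ, (γ.1, []))) =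
      bv k Q R (m + 1) (extHead γ) - (-1 : k) ^ m • bv k Q R (m + 1) (extHead (rotP Q γ)) := by
  rw [dLin_bv k (hm ▸ hγ.gbmem), dB_eq, sum_bv_extL_of_complete k hg hγ,
    sum_bv_extR_of_complete k hg hγ]

theorem dLin_cycG_of_complete (hg : IsGentle Q R) {C : PathDat Q} (hC : Complete Q R C)
    (hm : plen Q C = m) (heven : Even m) : dLin k Q R m (cycG k Q R m C) = 0 := by
  have hterm : ∀ i, dLin k Q R m (bv k Q R m (rotI Q i C, (psrc Q (rotI Q i C), []))) =
      bv k Q R (m + 1) (extHead (rotI Q i C)) - bv k Q R (m + 1) (extHead (rotI Q (i + 1) C)) := by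
    intro i
    rw [psrc, dLin_bv_of_complete k hg (hC.rotIter i) ((length_rotI_snd i C).trans hm),
      heven.neg_one_pow, one_smul, rotI_succ]
  -- all signs are `1` and the sum over a period of the rotations telescopes
  simp only [cycG, (heven.mul_left _).neg_one_pow, one_smul, map_sum, hterm,
    Finset.sum_range_sub', hC.periodP_spec.2]
  exact sub_self _

theorem cycG_apply_of_complete {C : PathDat Q} (hC : Complete Q R C)
    (h : GBmem Q R m (C, (C.1, []))) : cycG k Q R m C ⟨(C, (C.1, [])), h⟩ = 1 := by
  rw [cycG, Finsupp.finsetSum_apply,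
    Finset.sum_eq_single_of_mem 0 (Finset.mem_range.2 hC.periodP_spec.1)]
  · simp [bv_apply, rotI, psrc]
  · intro i hi hi0
    rw [Finsupp.smul_apply, bv_apply, if_neg, smul_zero]
    exact fun heq => rotI_ne_of_lt_periodP (Nat.pos_of_ne_zero hi0) (Finset.mem_range.1 hi)
      (congrArg Prod.fst heq)

theorem not_cohomIsZero_of_complete (hg : IsGentle Q R) {C : PathDat Q} (hC : Complete Q R C)
    (heven : Even (plen Q C)) : ¬ CohomIsZero k Q R (plen Q C) := by
  obtain ⟨m, hm⟩ : ∃ m, plen Q C = m + 1 :=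
    Nat.exists_eq_succ_of_ne_zero (List.length_pos_iff.2 hC.1.2.1).ne'
  rw [hm] at heven ⊢
  exact not_cohomIsZero_of_apply_ne_zero k (dLin_cycG_of_complete k hg hC hm heven)
    (y := ⟨_, hm ▸ hC.gbmem⟩) rfl (by rw [cycG_apply_of_complete k hC]; exact one_ne_zero)

theorem exists_not_cohomIsZero_of_complete (hg : IsGentle Q R) {C : PathDat Q}
    (hC : Complete Q R C) (m₀ : ℕ) : ∃ m, m₀ ≤ m ∧ ¬ CohomIsZero k Q R m := by
  have hpos : 0 < plen Q C := List.length_pos_iff.2 hC.1.2.1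
  refine ⟨_, ?_, not_cohomIsZero_of_complete k hg (hC.pow (by positivity : 0 < 2 * (m₀ + 1))) ?_⟩
  · rw [plen_powP]; nlinarith
  · rw [plen_powP]; exact (even_two_mul _).mul_right _

end CompleteCocycle

/-- For a gentle presentation `(Q, R)`, the following are
equivalent: `Γ_m = ∅` for all large `m` (i.e. `kQ/⟨R⟩` has finite global
dimension), `HH^m = 0` for all large `m`, and there is no complete cycle in
`(Q, R)`. -/
theorem finite_global_dimension_characterization (k : Type) [Field k] (Q : Quiv)
    (R : Set (Q.A × Q.A)) (hg : IsGentle Q R) :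
    ((∃ m₀ : ℕ, ∀ p : PathDat Q, InG Q R p → plen Q p < m₀) ↔
      (∃ m₀ : ℕ, ∀ m : ℕ, m₀ ≤ m → CohomIsZero k Q R m)) ∧
    ((∃ m₀ : ℕ, ∀ p : PathDat Q, InG Q R p → plen Q p < m₀) ↔
      ¬∃ C : PathDat Q, Complete Q R C) := by
  refine ⟨⟨fun ⟨m₀, h⟩ => ⟨m₀, fun m hm => cohomIsZero_of_forall_plen_lt k h hm⟩, ?_⟩,
    forall_plen_lt_iff_not_exists_complete⟩
  rintro ⟨m₀, hcoh⟩
  refine forall_plen_lt_iff_not_exists_complete.2 fun ⟨C, hC⟩ => ?_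
  obtain ⟨m, hm, hne⟩ := exists_not_cohomIsZero_of_complete k hg hC m₀
  exact hne (hcoh m hm)

end GentleTT
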